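/- arXiv:2110.11773 — 2 statements merged into one kernel-verified Lean document; each statement's English description precedes it below -/
import Mathlib

section
/- If the symmetric positive kernel k⁰(x, x') = exp(xᵀ A x') (A symmetric) satisfies, for all probability measures μ and all x, x' with k⁰(x,x') ≠ 0, the identity ∫ k⁰(x, y) dμ(y) = ∫ k⁰(x', y) dμ(y), then A = 0. -/
open Matrix MeasureTheory

theorem kernel_integral_invariance_forces_zero {d : ℕ}
    (A : Matrix (Fin d) (Fin d) ℝ) (hA : A.IsSymm)
    (h : ∀ μ : Measure (Fin d → ℝ), IsProbabilityMeasure μ →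
      ∀ x x' : Fin d → ℝ, Real.exp (x ⬝ᵥ A.mulVec x') ≠ 0 →
        ∫ y, Real.exp (x ⬝ᵥ A.mulVec y) ∂μ = ∫ y, Real.exp (x' ⬝ᵥ A.mulVec y) ∂μ) :
    A = 0 := by
  have key : ∀ x y : Fin d → ℝ, x ⬝ᵥ A.mulVec y = 0 := by
    intro x y
    have := h (Measure.dirac y) (by infer_instance) x 0 (Real.exp_ne_zero _)
    rw [integral_dirac, integral_dirac] at this
    have := Real.exp_injective this
    simpa using this
  ext i j
  have := key (Pi.single i 1) (Pi.single j 1)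
  simpa [Matrix.mulVec_single, dotProduct, Pi.single_apply] using this
end

section
/- Let μ = (1/n) Σ_i δ_{x_i} and F⁰(μ) = ½ ∬ exp(c(x, y)) dμ(x) dμ(y) viewed as a function E(x_1, …, x_n) = (1/(2n²)) Σ_{i,j} exp(c(x_i, x_j)) of the particle positions, with c(x, y) = xᵀ B y and B symmetric, W_V = −B. Then the gradient of E with respect to x_i equals −(1/n²) Σ_j exp(c(x_i, x_j)) W_V x_j; i.e., the unnormalized attention update x_i ← x_i + (1/n) Σ_j K⁰_{ij} W_V x_j is (up to the factor 1/n) a gradient ascent step on −E. -/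
/-!
Only the terms with `i = k` or `j = k` of the double sum depend on the `k`-th particle. By the
symmetry of `B`, each of these two families contributes `∑ j, exp ⟪x k, B (x j)⟫ • B (x j)` to the
gradient, and the resulting factor `2` cancels the `1 / 2` in the energy.
-/

open RealInnerProductSpace Finset

section Gradient

variable {F : Type*} [NormedAddCommGroup F] [InnerProductSpace ℝ F] [CompleteSpace F]
  {f : F → ℝ} {f' x : F}

theorem HasGradientAt.const_mul (c : ℝ) (hf : HasGradientAt f f' x) :
    HasGradientAt (fun y => c * f y) (c • f') x := by
  rw [hasGradientAt_iff_hasFDerivAt, map_smulₛₗ]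
  exact HasFDerivAt.const_mul hf c

theorem HasGradientAt.exp (hf : HasGradientAt f f' x) :
    HasGradientAt (fun y => Real.exp (f y)) (Real.exp (f x) • f') x := by
  rw [hasGradientAt_iff_hasFDerivAt, map_smulₛₗ]
  exact HasFDerivAt.exp hf

theorem HasGradientAt.fun_sum {ι : Type*} {u : Finset ι} {f : ι → F → ℝ} {f' : ι → F}
    (hf : ∀ i ∈ u, HasGradientAt (f i) (f' i) x) :
    HasGradientAt (fun y => ∑ i ∈ u, f i y) (∑ i ∈ u, f' i) x := by
  rw [hasGradientAt_iff_hasFDerivAt, map_sum]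
  exact HasFDerivAt.fun_sum hf

end Gradient

theorem sum_sum_smul_ite_add_ite {ι R M : Type*} [Fintype ι] [DecidableEq ι] [Semiring R]
    [AddCommMonoid M] [Module R M] {e : ι → ι → R} (he : ∀ i j, e i j = e j i) (v : ι → M) (k : ι) :
    ∑ i, ∑ j, e i j • ((if i = k then v j else 0) + (if j = k then v i else 0)) =
      (2 : R) • ∑ j, e k j • v j := by
  simp only [smul_add, smul_ite, smul_zero, sum_add_distrib, sum_ite_irrel, sum_const_zero,
    sum_ite_eq', mem_univ, if_true, he _ k, two_smul]

section Update

variable {ι : Type*} [DecidableEq ι]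

theorem hasFDerivAt_update_apply {𝕜 E : Type*} [NontriviallyNormedField 𝕜] [NormedAddCommGroup E]
    [NormedSpace 𝕜 E] (x : ι → E) (k i : ι) (z : E) :
    HasFDerivAt (fun z => Function.update x k z i)
      (if i = k then ContinuousLinearMap.id 𝕜 E else 0) z := by
  by_cases hik : i = k
  · subst hik
    simp only [Function.update_self, if_true]
    exact hasFDerivAt_id z
  · simpa [Function.update_of_ne hik, hik] using hasFDerivAt_const (x i) z

variable {F : Type*} [NormedAddCommGroup F] [InnerProductSpace ℝ F] [CompleteSpace F]
  {B : F →L[ℝ] F}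

theorem hasGradientAt_inner_update_apply (hB : (B : F →ₗ[ℝ] F).IsSymmetric)
    (x : ι → F) (k i j : ι) :
    HasGradientAt (fun z => ⟪Function.update x k z i, B (Function.update x k z j)⟫)
      ((if i = k then B (x j) else 0) + (if j = k then B (x i) else 0)) (x k) := by
  have h := (hasFDerivAt_update_apply x k i (x k)).inner ℝ
    (B.hasFDerivAt.comp (x k) (hasFDerivAt_update_apply x k j (x k)))
  rw [hasGradientAt_iff_hasFDerivAt]
  refine h.congr_fderiv (ContinuousLinearMap.ext fun v => ?_)
  have hB' : ∀ u, ⟪u, B v⟫ = ⟪v, B u⟫ := fun u => (hB u v).symm.trans (real_inner_comm _ _)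
  split_ifs <;> simp [fderivInnerCLM_apply, hB', real_inner_comm v, add_comm]

theorem hasGradientAt_sum_sum_exp_inner_update [Fintype ι] (hB : (B : F →ₗ[ℝ] F).IsSymmetric)
    (x : ι → F) (k : ι) :
    HasGradientAt
      (fun z => ∑ i, ∑ j, Real.exp ⟪Function.update x k z i, B (Function.update x k z j)⟫)
      ((2 : ℝ) • ∑ j, Real.exp ⟪x k, B (x j)⟫ • B (x j)) (x k) := by
  have hterm : ∀ i j, HasGradientAt
      (fun z => Real.exp ⟪Function.update x k z i, B (Function.update x k z j)⟫)
      (Real.exp ⟪x i, B (x j)⟫ •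
        ((if i = k then B (x j) else 0) + (if j = k then B (x i) else 0))) (x k) := fun i j => by
    simpa only [Function.update_eq_self] using (hasGradientAt_inner_update_apply hB x k i j).exp
  have hsymm : ∀ i j, Real.exp ⟪x i, B (x j)⟫ = Real.exp ⟪x j, B (x i)⟫ := fun i j =>
    congrArg Real.exp ((hB (x i) (x j)).symm.trans (real_inner_comm _ _))
  rw [← sum_sum_smul_ite_add_ite hsymm (fun j => B (x j)) k]
  exact HasGradientAt.fun_sum fun i _ => HasGradientAt.fun_sum fun j _ => hterm i j

end Update

/-- Gradient of the interaction energy `E(x₁,…,xₙ) = (1/(2n²)) Σ_{i,j} exp(x_iᵀ B x_j)`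
with respect to the `k`-th particle: the unnormalized attention update with `W_V = −B`
is a gradient descent step on `E`. -/
theorem energy_gradient_unnormalized_attention {d n : ℕ}
    (B WV : EuclideanSpace ℝ (Fin d) →L[ℝ] EuclideanSpace ℝ (Fin d))
    (hB : ∀ u v : EuclideanSpace ℝ (Fin d), ⟪B u, v⟫ = ⟪u, B v⟫)
    (hWV : ∀ v, WV v = -B v)
    (x : Fin n → EuclideanSpace ℝ (Fin d)) (k : Fin n) :
    gradient (fun z => (1 / (2 * (n : ℝ) ^ 2)) *
        ∑ i, ∑ j, Real.exp ⟪Function.update x k z i, B (Function.update x k z j)⟫) (x k) =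
      -∑ j, ((1 / (n : ℝ) ^ 2) * Real.exp ⟪x k, B (x j)⟫) • WV (x j) := by
  have hE := (hasGradientAt_sum_sum_exp_inner_update hB x k).const_mul (1 / (2 * (n : ℝ) ^ 2))
  have hc : 1 / (2 * (n : ℝ) ^ 2) * 2 = 1 / (n : ℝ) ^ 2 := by ring
  rw [hE.gradient, smul_smul, hc, smul_sum]
  simp only [hWV, smul_neg, sum_neg_distrib, neg_neg, mul_smul]
end
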